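/- arXiv:1803.04031 — 8 statements merged into one kernel-verified Lean document; each statement's English description precedes it below -/
import Mathlib

section
/- If G is a graph with n vertices and minimum degree at least 3, then γ_{2,2}(G) ≤ (6/7)·n. -/
open SimpleGraph Finset

def IsAbDom {V : Type*} [Fintype V] [DecidableEq V] (G : SimpleGraph V)
    [DecidableRel G.Adj] (a b : ℕ) (S : Finset V) : Prop :=
  (∀ v ∈ S, a ≤ (G.neighborFinset v ∩ S).card) ∧
  (∀ v ∉ S, b ≤ (G.neighborFinset v ∩ S).card)

/-!
Fix `k + 1` neighbours `A v` of every vertex `v`. If `R` is independent in the graph joining two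
vertices whenever they lie in a common `A v`, each `A v` meets `R` at most once, so every vertex
keeps `k` of its chosen neighbours in the complement of `R`, which is therefore
`(k, k)`-dominating. That graph has degree sum at most `n (k + 1) k`, so the greedy bound
`n² ≤ α (n + ∑ deg)` behind Turán's theorem gives `|R| ≥ n / (k² + k + 1)`; for `k = 2` this is
`n / 7`.
-/

namespace SimpleGraph

variable {V : Type*}

/-- The 2-section of the hypergraph with edges `A v`. -/
def primalGraph (A : V → Finset V) : SimpleGraph V :=
  fromRel fun u w => ∃ v, u ∈ A v ∧ w ∈ A v

theorem primalGraph_adj {A : V → Finset V} {u w : V} :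
    (primalGraph A).Adj u w ↔ u ≠ w ∧ ∃ v, u ∈ A v ∧ w ∈ A v := by
  simp only [primalGraph, fromRel_adj, and_comm (a := w ∈ _), or_self]

theorem IsIndepSet.card_inter_le_one [DecidableEq V] {A : V → Finset V} {R : Finset V}
    (hR : (primalGraph A).IsIndepSet (R : Set V)) (v : V) : #(A v ∩ R) ≤ 1 :=
  card_le_one.2 fun _ hu _ hw => by_contra fun hne =>
    hR (mem_inter.1 hu).2 (mem_inter.1 hw).2 hne
      (primalGraph_adj.2 ⟨hne, v, (mem_inter.1 hu).1, (mem_inter.1 hw).1⟩)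

variable [Fintype V] [DecidableEq V]

variable (G : SimpleGraph V) [DecidableRel G.Adj]

/-- Greedily pick a vertex `v` of minimum degree in `G[s]` and delete its closed neighbourhood;
`t v` records the number of vertices deleted with `v`. -/
theorem exists_isIndepSet_sum_sq_le (s : Finset V) :
    ∃ (R : Finset V) (t : V → ℕ), R ⊆ s ∧ G.IsIndepSet (R : Set V) ∧ ∑ v ∈ R, t v = #s ∧
      ∑ v ∈ R, t v ^ 2 ≤ #s + ∑ v ∈ s, #(G.neighborFinset v ∩ s) := by
  induction s using Finset.strongInduction with
  | H s ih =>
  rcases s.eq_empty_or_nonempty with rfl | hs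
  · exact ⟨∅, 0, by simp⟩
  obtain ⟨v, hv, hmin⟩ := s.exists_min_image (fun u => #(G.neighborFinset u ∩ s)) hs
  set d := #(G.neighborFinset v ∩ s)
  set X := insert v (G.neighborFinset v) ∩ s
  have hXs : X ⊆ s := inter_subset_right
  have hvX : v ∈ X := mem_inter.2 ⟨mem_insert_self _ _, hv⟩
  have hX : #X = d + 1 := by
    rw [show X = insert v (G.neighborFinset v ∩ s) from insert_inter_of_mem hv,
      card_insert_of_notMem (by simp)]
  obtain ⟨R, t, hRs, hR, hsum, hsq⟩ := ih (s \ X) (sdiff_ssubset hXs ⟨v, hvX⟩)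
  have hvR : v ∉ R := fun h => (mem_sdiff.1 (hRs h)).2 hvX
  have ht : ∀ u ∈ R, Function.update t v (d + 1) u = t u := fun u hu =>
    Function.update_of_ne (ne_of_mem_of_not_mem hu hvR) _ _
  refine ⟨insert v R, Function.update t v (d + 1), insert_subset hv (hRs.trans sdiff_subset),
    ?_, ?_, ?_⟩
  · have hvu : ∀ u ∈ R, ¬G.Adj v u := fun u hu hadj => (mem_sdiff.1 (hRs hu)).2 <|
      mem_inter.2 ⟨mem_insert_of_mem ((G.mem_neighborFinset _ _).2 hadj), sdiff_subset (hRs hu)⟩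
    rw [coe_insert, isIndepSet_iff, Set.pairwise_insert]
    exact ⟨hR, fun u hu _ => ⟨hvu u hu, fun hadj => hvu u hu hadj.symm⟩⟩
  · rw [sum_insert hvR, Function.update_self, sum_congr rfl ht, hsum,
      card_sdiff_of_subset hXs, hX]
    have : d + 1 ≤ #s := hX ▸ card_le_card hXs
    omega
  · have hclosed : (d + 1) * d ≤ ∑ u ∈ X, #(G.neighborFinset u ∩ s) := by
      simpa [hX] using card_nsmul_le_sum X _ d fun u hu => hmin u (hXs hu)
    have hrest : ∑ u ∈ s \ X, #(G.neighborFinset u ∩ (s \ X))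
        ≤ ∑ u ∈ s \ X, #(G.neighborFinset u ∩ s) :=
      sum_le_sum fun u _ => card_le_card (inter_subset_inter_left sdiff_subset)
    rw [sum_insert hvR, Function.update_self, sum_congr rfl fun u hu => by rw [ht u hu],
      ← sum_sdiff hXs, ← card_sdiff_add_card_eq_card hXs, hX]
    nlinarith

/-- Turán's theorem, in its degree-sum form. -/
theorem exists_isIndepSet_card_sq_le_mul :
    ∃ R : Finset V, G.IsIndepSet (R : Set V) ∧
      Fintype.card V ^ 2 ≤ #R * (Fintype.card V + ∑ v, G.degree v) := by
  obtain ⟨R, t, -, hR, hsum, hsq⟩ := G.exists_isIndepSet_sum_sq_le univ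
  simp only [inter_univ, card_univ, card_neighborFinset_eq_degree] at hsum hsq
  refine ⟨R, hR, ?_⟩
  calc Fintype.card V ^ 2 = (∑ v ∈ R, t v) ^ 2 := by rw [hsum]
    _ ≤ #R * ∑ v ∈ R, t v ^ 2 := sq_sum_le_card_mul_sum_sq
    _ ≤ _ := Nat.mul_le_mul_left _ hsq

section Primal

variable {A : V → Finset V}

theorem degree_primalGraph_le [DecidableRel (primalGraph A).Adj] (u : V) :
    (primalGraph A).degree u ≤ ∑ v, if u ∈ A v then #(A v) - 1 else 0 := by
  have hsub : (primalGraph A).neighborFinset u ⊆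
      (univ.filter (u ∈ A ·)).biUnion fun v => (A v).erase u := by
    intro w hw
    obtain ⟨hne, v, hu, hw⟩ := primalGraph_adj.1 ((mem_neighborFinset _ _ _).1 hw)
    exact mem_biUnion.2 ⟨v, mem_filter.2 ⟨mem_univ _, hu⟩, mem_erase.2 ⟨hne.symm, hw⟩⟩
  rw [← card_neighborFinset_eq_degree, ← sum_filter]
  refine (card_le_card hsub).trans (card_biUnion_le.trans_eq (sum_congr rfl fun v hv => ?_))
  exact card_erase_of_mem (mem_filter.1 hv).2

theorem sum_degree_primalGraph_le [DecidableRel (primalGraph A).Adj] :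
    ∑ u, (primalGraph A).degree u ≤ ∑ v, #(A v) * (#(A v) - 1) :=
  calc ∑ u, (primalGraph A).degree u
      ≤ ∑ u, ∑ v, if u ∈ A v then #(A v) - 1 else 0 := sum_le_sum fun u _ => degree_primalGraph_le u
    _ = ∑ v, #(A v) * (#(A v) - 1) := by
      rw [sum_comm]
      exact sum_congr rfl fun v _ => by rw [sum_ite_mem, univ_inter, sum_const, smul_eq_mul]

end Primal

theorem isAbDom_compl_of_isIndepSet_primalGraph {k : ℕ} {A : V → Finset V}
    (hA : ∀ v, A v ⊆ G.neighborFinset v) (hk : ∀ v, k + 1 ≤ #(A v)) {R : Finset V}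
    (hR : (primalGraph A).IsIndepSet (R : Set V)) : IsAbDom G k k Rᶜ := by
  have key : ∀ v, k ≤ #(G.neighborFinset v ∩ Rᶜ) := fun v => by
    have hsub : A v \ R ⊆ G.neighborFinset v ∩ Rᶜ := fun u hu =>
      mem_inter.2 ⟨hA v (mem_sdiff.1 hu).1, mem_compl.2 (mem_sdiff.1 hu).2⟩
    have := card_sdiff_add_card_inter (A v) R
    have := card_le_card hsub
    have := hR.card_inter_le_one v
    have := hk v
    omega
  exact ⟨fun v _ => key v, fun v _ => key v⟩

theorem exists_isAbDom_card_le (k : ℕ) (hδ : k + 1 ≤ G.minDegree) :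
    ∃ S : Finset V, IsAbDom G k k S ∧ (k ^ 2 + k + 1) * #S ≤ (k ^ 2 + k) * Fintype.card V := by
  classical
  choose A hA hAcard using fun v =>
    exists_subset_card_eq (s := G.neighborFinset v) (n := k + 1)
      (by rw [card_neighborFinset_eq_degree]; exact hδ.trans (G.minDegree_le_degree v))
  obtain ⟨R, hR, hn⟩ := (primalGraph A).exists_isIndepSet_card_sq_le_mul
  refine ⟨Rᶜ, G.isAbDom_compl_of_isIndepSet_primalGraph hA (fun v => (hAcard v).ge) hR, ?_⟩
  set n := Fintype.card V
  have hdeg : ∑ u, (primalGraph A).degree u ≤ n * ((k + 1) * k) :=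
    sum_degree_primalGraph_le.trans_eq (by simp [hAcard, n])
  have hRbound : n ≤ (k ^ 2 + k + 1) * #R := by
    rcases Nat.eq_zero_or_pos n with hn0 | hn0
    · omega
    refine Nat.le_of_mul_le_mul_left ?_ hn0
    calc n * n = n ^ 2 := (sq n).symm
      _ ≤ #R * (n + ∑ u, (primalGraph A).degree u) := hn
      _ ≤ #R * (n + n * ((k + 1) * k)) := by gcongr
      _ = n * ((k ^ 2 + k + 1) * #R) := by ring
  have hRn : #R ≤ n := card_le_univ R
  rw [card_compl]
  change _ * (n - #R) ≤ _
  zify [hRn] at hRbound ⊢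
  linarith

end SimpleGraph

theorem stmt1 {V : Type*} [Fintype V] [DecidableEq V] (G : SimpleGraph V) [DecidableRel G.Adj] (hd : 3 ≤ G.minDegree) :
    ∃ S : Finset V, IsAbDom G 2 2 S ∧ (S.card : ℝ) ≤ 6 / 7 * Fintype.card V := by
  obtain ⟨S, hS, hcard⟩ := G.exists_isAbDom_card_le 2 hd
  refine ⟨S, hS, ?_⟩
  have : (7 * S.card : ℝ) ≤ 6 * Fintype.card V := by exact_mod_cast hcard
  linarith
end

section
/- If G is a graph with n vertices and minimum degree at least 4, then γ_{2,2}(G) ≤ (4/5)·n. -/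
/-!
Every vertex `v` picks four neighbours `A v`. Put each vertex into a random set `T` independently
with probability `1/3`, and then, for every `v`, delete `|T ∩ A v| - 2` points of `T ∩ A v` from
`T` when this is positive. The remaining set meets every `A v` in at most two points, so its
complement is (2,2)-dominating, and its expected size is at least
`n/3 - n · E(|T ∩ A v| - 2)⁺ = n/3 - 10n/81 = 17n/81 ≥ n/5`.
-/

open SimpleGraph Finset

namespace Finset

variable {α : Type*} [DecidableEq α]

/-- `3 ^ #s` times the expectation of `f T`, where `T ⊆ s` contains each element of `s`
independently with probability `1 / 3`. -/
def weightedSubsetSum (s : Finset α) (f : Finset α → ℕ) : ℕ :=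
  ∑ T ∈ s.powerset, 2 ^ #(s \ T) * f T

lemma weightedSubsetSum_congr {s : Finset α} {f g : Finset α → ℕ}
    (h : ∀ T ⊆ s, f T = g T) :
    weightedSubsetSum s f = weightedSubsetSum s g :=
  sum_congr rfl fun T hT => by rw [h T (mem_powerset.1 hT)]

lemma weightedSubsetSum_add (s : Finset α) (f g : Finset α → ℕ) :
    weightedSubsetSum s (fun T => f T + g T) = weightedSubsetSum s f + weightedSubsetSum s g := by
  simp only [weightedSubsetSum, mul_add, sum_add_distrib]

lemma weightedSubsetSum_const_mul (s : Finset α) (c : ℕ) (f : Finset α → ℕ) :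
    weightedSubsetSum s (fun T => c * f T) = c * weightedSubsetSum s f := by
  simp only [weightedSubsetSum, mul_sum, mul_left_comm]

lemma weightedSubsetSum_sum {ι : Type*} (s : Finset α) (t : Finset ι)
    (f : ι → Finset α → ℕ) :
    weightedSubsetSum s (fun T => ∑ i ∈ t, f i T) = ∑ i ∈ t, weightedSubsetSum s (f i) := by
  simp only [weightedSubsetSum, mul_sum]
  exact sum_comm

lemma weightedSubsetSum_const (s : Finset α) (c : ℕ) :
    weightedSubsetSum s (fun _ => c) = 3 ^ #s * c := by
  have h := sum_pow_mul_eq_add_pow (1 : ℕ) 2 s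
  rw [weightedSubsetSum, ← sum_mul, ← h]
  congr 1
  exact sum_congr rfl fun T hT => by rw [one_pow, one_mul, card_sdiff_of_subset (mem_powerset.1 hT)]

lemma weightedSubsetSum_insert {s : Finset α} {a : α} (ha : a ∉ s) (f : Finset α → ℕ) :
    weightedSubsetSum (insert a s) f
      = 2 * weightedSubsetSum s f + weightedSubsetSum s (fun T => f (insert a T)) := by
  rw [weightedSubsetSum, sum_powerset_insert ha, weightedSubsetSum, weightedSubsetSum, mul_sum]
  congr 1 <;> refine sum_congr rfl fun T hT => ?_
  · have haT : a ∉ T := fun h => ha (mem_powerset.1 hT h)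
    rw [insert_sdiff_of_notMem _ haT, card_insert_of_notMem fun h => ha (mem_sdiff.1 h).1,
      pow_succ]
    ring
  · rw [insert_sdiff_insert, sdiff_insert_of_notMem ha]

lemma weightedSubsetSum_comp_inter (s A : Finset α) (f : Finset α → ℕ) :
    weightedSubsetSum s (fun T => f (T ∩ A)) = 3 ^ #(s \ A) * weightedSubsetSum (s ∩ A) f := by
  induction s using Finset.induction_on generalizing f with
  | empty => simp [weightedSubsetSum]
  | @insert a s ha ih =>
    rw [weightedSubsetSum_insert ha]
    by_cases haA : a ∈ A
    · simp only [insert_inter_of_mem haA]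
      rw [ih, ih (fun B => f (insert a B)), insert_sdiff_of_mem _ haA,
        weightedSubsetSum_insert fun h => ha (mem_inter.1 h).1]
      ring
    · simp only [insert_inter_of_notMem haA]
      rw [ih, insert_sdiff_of_notMem _ haA,
        card_insert_of_notMem fun h => ha (mem_sdiff.1 h).1, pow_succ]
      ring

lemma three_mul_weightedSubsetSum_card (s : Finset α) :
    3 * weightedSubsetSum s card = #s * 3 ^ #s := by
  induction s using Finset.induction_on with
  | empty => simp [weightedSubsetSum]
  | @insert a s ha ih =>
    have hcard :
        weightedSubsetSum s (fun T => #(insert a T)) = weightedSubsetSum s card + 3 ^ #s := by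
      rw [weightedSubsetSum_congr fun T hT => card_insert_of_notMem fun h => ha (hT h),
        weightedSubsetSum_add, weightedSubsetSum_const, mul_one]
    rw [weightedSubsetSum_insert ha, hcard, card_insert_of_notMem ha, pow_succ]
    linarith

lemma weightedSubsetSum_card_sub_two {A : Finset α} (hA : #A = 4) :
    weightedSubsetSum A (fun B => #B - 2) = 10 := by
  rw [weightedSubsetSum,
    sum_congr rfl fun B hB => by rw [card_sdiff_of_subset (mem_powerset.1 hB)],
    sum_powerset_apply_card (fun k => 2 ^ (#A - k) * (k - 2)), hA]
  decide

lemma exists_le_of_weightedSubsetSum_le {s : Finset α} {f g : Finset α → ℕ}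
    (h : weightedSubsetSum s f ≤ weightedSubsetSum s g) : ∃ T ⊆ s, f T ≤ g T := by
  obtain ⟨T, hT, hle⟩ := exists_le_of_sum_le ⟨∅, empty_mem_powerset s⟩ h
  exact ⟨T, mem_powerset.1 hT, le_of_mul_le_mul_left hle (by positivity)⟩

lemma exists_subset_forall_card_inter_le {ι : Type*} [Fintype ι] (T : Finset α)
    (A : ι → Finset α) (k : ℕ) :
    ∃ T' ⊆ T, #T ≤ #T' + ∑ i, (#(T ∩ A i) - k) ∧ ∀ i, #(T' ∩ A i) ≤ k := by
  choose R hR_sub hR_card using fun i => exists_subset_card_eq (Nat.sub_le #(T ∩ A i) k)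
  refine ⟨T \ univ.biUnion R, sdiff_subset, ?_, fun i => ?_⟩
  · calc #T ≤ #(T \ univ.biUnion R) + #(univ.biUnion R) := card_le_card_sdiff_add_card
      _ ≤ #(T \ univ.biUnion R) + ∑ i, #(R i) := Nat.add_le_add_left card_biUnion_le _
      _ = _ := by simp only [hR_card]
  · have hsub : (T \ univ.biUnion R) ∩ A i ⊆ (T ∩ A i) \ R i := fun x hx => by
      simp only [mem_inter, mem_sdiff, mem_biUnion, mem_univ, true_and, not_exists] at hx ⊢
      exact ⟨⟨hx.1.1, hx.2⟩, hx.1.2 i⟩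
    have := card_le_card hsub
    rw [card_sdiff_of_subset (hR_sub i), hR_card i] at this
    omega

end Finset

theorem exists_card_le_five_mul_forall_card_inter_le_two {V ι : Type*} [Fintype V]
    [DecidableEq V] [Fintype ι] (A : ι → Finset V) (hA : ∀ i, #(A i) = 4)
    (hι : Fintype.card ι ≤ Fintype.card V) :
    ∃ T : Finset V, Fintype.card V ≤ 5 * #T ∧ ∀ i, #(T ∩ A i) ≤ 2 := by
  set n := Fintype.card V
  have hexcess : ∀ i, 81 * weightedSubsetSum univ (fun T => #(T ∩ A i) - 2) = 10 * 3 ^ n := by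
    intro i
    have hsplit : #(univ \ A i) + 4 = n := by
      have h4 : 4 ≤ n := hA i ▸ card_le_univ (A i)
      rw [card_sdiff_of_subset (subset_univ _), card_univ, hA]
      omega
    rw [weightedSubsetSum_comp_inter univ (A i) (fun B => #B - 2), univ_inter,
      weightedSubsetSum_card_sub_two (hA i), ← hsplit, pow_add]
    ring
  have hmean : weightedSubsetSum univ (fun T => 81 * ∑ i, (#(T ∩ A i) - 2) + 17 * n)
      ≤ weightedSubsetSum univ (fun T : Finset V => 81 * #T) := by
    have hcard : 3 * weightedSubsetSum (univ : Finset V) card = n * 3 ^ n := by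
      rw [three_mul_weightedSubsetSum_card, card_univ]
    rw [weightedSubsetSum_add, weightedSubsetSum_const_mul, weightedSubsetSum_sum, mul_sum,
      sum_congr rfl fun i _ => hexcess i, weightedSubsetSum_const, weightedSubsetSum_const_mul,
      sum_const, card_univ, card_univ, smul_eq_mul]
    nlinarith [Nat.mul_le_mul_right (10 * 3 ^ n) hι]
  obtain ⟨T, -, hT⟩ := exists_le_of_weightedSubsetSum_le hmean
  obtain ⟨T', -, hT'_card, hT'_inter⟩ := exists_subset_forall_card_inter_le T A 2
  exact ⟨T', by omega, hT'_inter⟩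

theorem stmt2 {V : Type*} [Fintype V] [DecidableEq V] (G : SimpleGraph V) [DecidableRel G.Adj] (hd : 4 ≤ G.minDegree) :
    ∃ S : Finset V, IsAbDom G 2 2 S ∧ (S.card : ℝ) ≤ 4 / 5 * Fintype.card V := by
  have hdeg : ∀ v, 4 ≤ #(G.neighborFinset v) := fun v => by
    rw [card_neighborFinset_eq_degree]
    exact hd.trans (G.minDegree_le_degree v)
  choose A hA_sub hA_card using fun v => exists_subset_card_eq (hdeg v)
  obtain ⟨T, hT_card, hT_inter⟩ :=
    exists_card_le_five_mul_forall_card_inter_le_two A hA_card le_rfl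
  have hdom : ∀ v, 2 ≤ #(G.neighborFinset v ∩ Tᶜ) := fun v =>
    calc 2 ≤ #(A v) - #(T ∩ A v) := by have := hT_inter v; have := hA_card v; omega
      _ = #(A v \ T) := card_sdiff.symm
      _ ≤ #(G.neighborFinset v ∩ Tᶜ) := by
        rw [sdiff_eq_inter_compl]
        exact card_le_card (inter_subset_inter_right (hA_sub v))
  refine ⟨Tᶜ, ⟨fun v _ => hdom v, fun v _ => hdom v⟩, ?_⟩
  have hT_real : (Fintype.card V : ℝ) ≤ 5 * #T := by exact_mod_cast hT_card
  rw [card_compl, Nat.cast_sub (card_le_univ T)]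
  linarith
end

section
/- Let a < b be positive integers and let G be a graph with n vertices and minimum degree at least a+b. If G has a spanning (b−a)-regular subgraph, then γ_{a,b}(G) ≤ ((a+b)/(a+b+1))·n. -/
/-!
For every vertex `v`, choose `2a` neighbours of `v` outside the `(b - a)`-regular factor `H`
(there is room since `deg v ≥ a + b`) and split them into `a` pairs. Adding these pairs as edges
to `H` gives a graph `K` with at most `(a + b) n / 2` edges, so by Caro–Wei and Cauchy–Schwarz
`K` has an independent set `I` with `(a + b + 1) |I| ≥ n`. The complement of `I` is
`(a, b)`-dominating: `I` contains at most one vertex of each pair, so every `v` keeps `a` of its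
pair vertices outside `I`, and a vertex of `I` also has all `b - a` of its `H`-neighbours outside
`I`.
-/

open SimpleGraph Finset

theorem Finset.exists_embedding_forall_mem_of_card_le {ι α : Type*} [Fintype ι] {s : Finset α}
    (h : Fintype.card ι ≤ #s) : ∃ g : ι ↪ α, ∀ i, g i ∈ s := by
  obtain ⟨e⟩ := Function.Embedding.nonempty_of_card_le (h.trans_eq (Fintype.card_coe s).symm)
  exact ⟨e.trans (Function.Embedding.subtype _), fun i => (e i).2⟩

namespace SimpleGraph

section CaroWei

variable {V : Type*} [Fintype V] [DecidableEq V] (K : SimpleGraph V) [DecidableRel K.Adj]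

/-- Caro–Wei inside `s`, greedily: a vertex of minimum degree in `K[s]` together with its
neighbours contributes at most `1` to the sum. -/
theorem exists_isIndepSet_subset_sum_inv_le (s : Finset V) :
    ∃ I ⊆ s, K.IsIndepSet (I : Set V) ∧
      ∑ v ∈ s, ((#(K.neighborFinset v ∩ s) : ℝ) + 1)⁻¹ ≤ #I := by
  induction s using Finset.strongInduction with
  | _ s ih =>
  obtain rfl | hne := s.eq_empty_or_nonempty
  · exact ⟨∅, by simp, by simp, by simp⟩
  obtain ⟨v, hvs, hvmin⟩ := s.exists_min_image (fun u => #(K.neighborFinset u ∩ s)) hne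
  set A := insert v (K.neighborFinset v)
  obtain ⟨I, hIs, hI, hsum⟩ :=
    ih (s \ A) (ssubset_iff_of_subset sdiff_subset |>.2 ⟨v, hvs, by simp [A]⟩)
  have hIA : ∀ w ∈ I, w ∉ A := fun w hw => (mem_sdiff.1 (hIs hw)).2
  have hvI : v ∉ I := fun hv => hIA v hv (mem_insert_self _ _)
  refine ⟨insert v I, insert_subset hvs (hIs.trans sdiff_subset), ?_, ?_⟩
  · rw [coe_insert]
    refine hI.insert_of_notMem hvI fun w hw => ?_
    have hvw : ¬K.Adj v w := fun h => hIA w hw (mem_insert_of_mem (by simpa using h))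
    exact ⟨hvw, fun h => hvw h.symm⟩
  set d := #(K.neighborFinset v ∩ s)
  have hclosed : ∑ u ∈ s ∩ A, ((#(K.neighborFinset u ∩ s) : ℝ) + 1)⁻¹ ≤ 1 := by
    have hcard : #(s ∩ A) ≤ d + 1 := by
      refine (card_le_card fun u hu => ?_).trans (card_insert_le v (K.neighborFinset v ∩ s))
      obtain ⟨hus, huA⟩ := mem_inter.1 hu
      rcases mem_insert.1 huA with rfl | hu
      · exact mem_insert_self _ _
      · exact mem_insert_of_mem (mem_inter.2 ⟨hu, hus⟩)
    calc ∑ u ∈ s ∩ A, ((#(K.neighborFinset u ∩ s) : ℝ) + 1)⁻¹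
        ≤ ∑ _u ∈ s ∩ A, ((d : ℝ) + 1)⁻¹ := by
          gcongr with u hu
          exact_mod_cast hvmin u (mem_inter.1 hu).1
      _ ≤ ((d : ℝ) + 1) * ((d : ℝ) + 1)⁻¹ := by
          rw [sum_const, nsmul_eq_mul]
          gcongr
          exact_mod_cast hcard
      _ = 1 := mul_inv_cancel₀ (by positivity)
  have hrest : ∑ u ∈ s \ A, ((#(K.neighborFinset u ∩ s) : ℝ) + 1)⁻¹ ≤ #I := by
    refine le_trans (sum_le_sum fun u _ => ?_) hsum
    gcongr
    exact sdiff_subset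
  rw [← sum_inter_add_sum_sdiff s A, card_insert_of_notMem hvI]
  push_cast
  linarith

theorem exists_isIndepSet_of_two_mul_card_edgeFinset_le {k : ℕ}
    (hK : 2 * #K.edgeFinset ≤ k * Fintype.card V) :
    ∃ I : Finset V, K.IsIndepSet (I : Set V) ∧ Fintype.card V ≤ (k + 1) * #I := by
  obtain ⟨I, -, hI, hsum⟩ := K.exists_isIndepSet_subset_sum_inv_le univ
  simp only [inter_univ] at hsum
  refine ⟨I, hI, ?_⟩
  have hdeg : ∑ v, ((#(K.neighborFinset v) : ℝ) + 1) ≤ (k + 1) * Fintype.card V := by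
    have : ∑ v, (#(K.neighborFinset v) + 1) ≤ (k + 1) * Fintype.card V := by
      simp only [card_neighborFinset_eq_degree, sum_add_distrib, K.sum_degrees_eq_twice_card_edges,
        sum_const, card_univ, smul_eq_mul, mul_one]
      linarith
    exact_mod_cast this
  have hCS := sum_sq_le_sum_mul_sum_of_sq_le_mul univ
    (r := fun _ => (1 : ℝ)) (f := fun v => (#(K.neighborFinset v) : ℝ) + 1)
    (g := fun v => ((#(K.neighborFinset v) : ℝ) + 1)⁻¹) (fun _ _ => by positivity)
    (fun _ _ => by positivity) (fun _ _ => by rw [mul_inv_cancel₀ (by positivity)]; simp)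
  simp only [sum_const, card_univ, nsmul_eq_mul, mul_one] at hCS
  have hreal : (Fintype.card V : ℝ) * Fintype.card V ≤ Fintype.card V * ((k + 1) * #I) := by
    nlinarith [hCS.trans (mul_le_mul hdeg hsum (by positivity) (by positivity))]
  rcases Nat.eq_zero_or_pos (Fintype.card V) with h0 | hpos
  · simp [h0]
  exact_mod_cast le_of_mul_le_mul_left hreal (by exact_mod_cast hpos)

end CaroWei

section PairGraph

variable {V : Type*} {a : ℕ}

def pairGraph (g : V → Fin a × Bool ↪ V) : SimpleGraph V :=
  fromEdgeSet (Set.range fun p : V × Fin a => s(g p.1 (p.2, false), g p.1 (p.2, true)))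

theorem pairGraph_adj (g : V → Fin a × Bool ↪ V) (v : V) (i : Fin a) :
    (pairGraph g).Adj (g v (i, false)) (g v (i, true)) :=
  (fromEdgeSet_adj _).2 ⟨⟨(v, i), rfl⟩, (g v).injective.ne (by simp)⟩

theorem IsIndepSet.le_card_map_sdiff [DecidableEq V] {K : SimpleGraph V} {I : Finset V}
    (hI : K.IsIndepSet (I : Set V)) (g : Fin a × Bool ↪ V)
    (hg : ∀ i, K.Adj (g (i, false)) (g (i, true))) : a ≤ #(univ.map g \ I) := by
  have hmiss : ∀ i, ∃ c, g (i, c) ∉ I := by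
    by_contra! h
    obtain ⟨i, hi⟩ := h
    exact hI (hi false) (hi true) (hg i).ne (hg i)
  choose c hc using hmiss
  let e : Fin a ↪ V := ⟨fun i => g (i, c i), fun i j h => congrArg Prod.fst (g.injective h)⟩
  calc a = #(univ.map e) := by simp
    _ ≤ #(univ.map g \ I) := card_le_card fun x hx => by
        obtain ⟨i, -, rfl⟩ := mem_map.1 hx
        exact mem_sdiff.2 ⟨mem_map_of_mem _ (mem_univ _), hc i⟩

variable [Fintype V] [DecidableEq V]

theorem card_neighborFinset_sdiff_of_le {G H : SimpleGraph V} [DecidableRel G.Adj]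
    [DecidableRel H.Adj] (hHG : H ≤ G) (v : V) :
    #(G.neighborFinset v \ H.neighborFinset v) = G.degree v - H.degree v := by
  have hsub : H.neighborFinset v ⊆ G.neighborFinset v := fun w hw => by
    simpa using hHG ((mem_neighborFinset _ _ _).1 hw)
  rw [card_sdiff_of_subset hsub, card_neighborFinset_eq_degree, card_neighborFinset_eq_degree]

theorem card_edgeFinset_pairGraph_le (g : V → Fin a × Bool ↪ V)
    [DecidableRel (pairGraph g).Adj] : #(pairGraph g).edgeFinset ≤ Fintype.card V * a := by
  calc #(pairGraph g).edgeFinset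
      ≤ #((univ : Finset (V × Fin a)).image fun p => s(g p.1 (p.2, false), g p.1 (p.2, true))) := by
        refine card_le_card fun e he => ?_
        rw [mem_edgeFinset, pairGraph, edgeSet_fromEdgeSet] at he
        obtain ⟨p, rfl⟩ := he.1
        exact mem_image_of_mem _ (mem_univ p)
    _ ≤ Fintype.card V * a := card_image_le.trans (by simp)

theorem two_mul_card_edgeFinset_sup_pairGraph_le {H : SimpleGraph V} [DecidableRel H.Adj]
    {d : ℕ} (hH : ∀ v, H.degree v = d) (g : V → Fin a × Bool ↪ V)
    [DecidableRel (H ⊔ pairGraph g).Adj] :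
    2 * #(H ⊔ pairGraph g).edgeFinset ≤ (d + 2 * a) * Fintype.card V := by
  classical
  have hHedges : 2 * #H.edgeFinset = d * Fintype.card V := by
    rw [← H.sum_degrees_eq_twice_card_edges]
    simp [hH, mul_comm]
  calc _ ≤ 2 * #(H.edgeFinset ∪ (pairGraph g).edgeFinset) := by
        gcongr
        intro e he
        simpa using he
    _ ≤ 2 * #H.edgeFinset + 2 * (Fintype.card V * a) := by
        grw [card_union_le, card_edgeFinset_pairGraph_le g]
        omega
    _ = (d + 2 * a) * Fintype.card V := by rw [hHedges]; ring

theorem isAbDom_compl_of_isIndepSet {G H : SimpleGraph V} [DecidableRel G.Adj]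
    [DecidableRel H.Adj] {b : ℕ} (hab : a ≤ b) (hHG : H ≤ G) (hH : ∀ v, H.degree v = b - a)
    (g : V → Fin a × Bool ↪ V) (hg : ∀ v p, g v p ∈ G.neighborFinset v \ H.neighborFinset v)
    {I : Finset V} (hI : (H ⊔ pairGraph g).IsIndepSet (I : Set V)) : IsAbDom G a b Iᶜ := by
  have hpairs : ∀ v, a ≤ #(univ.map (g v) \ I) := fun v =>
    hI.le_card_map_sdiff (g v) fun i => Or.inr (pairGraph_adj g v i)
  have hkept : ∀ v, univ.map (g v) \ I ⊆ G.neighborFinset v ∩ Iᶜ := fun v x hx => by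
    obtain ⟨hx, hxI⟩ := mem_sdiff.1 hx
    obtain ⟨p, -, rfl⟩ := mem_map.1 hx
    exact mem_inter.2 ⟨(mem_sdiff.1 (hg v p)).1, mem_compl.2 hxI⟩
  refine ⟨fun v _ => (hpairs v).trans (card_le_card (hkept v)), fun v hv => ?_⟩
  rw [mem_compl, not_not] at hv
  have hHnbr : H.neighborFinset v ⊆ G.neighborFinset v ∩ Iᶜ := fun w hw => by
    rw [mem_neighborFinset] at hw
    exact mem_inter.2 ⟨(mem_neighborFinset _ _ _).2 (hHG hw),
      mem_compl.2 fun hwI => hI hv hwI hw.ne (Or.inl hw)⟩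
  have hdisj : Disjoint (H.neighborFinset v) (univ.map (g v) \ I) :=
    Finset.disjoint_left.2 fun w hw hw' => by
      obtain ⟨p, -, rfl⟩ := mem_map.1 (mem_sdiff.1 hw').1
      exact (mem_sdiff.1 (hg v p)).2 hw
  calc b = (b - a) + a := by omega
    _ ≤ #(H.neighborFinset v) + #(univ.map (g v) \ I) := by
        rw [card_neighborFinset_eq_degree, hH]
        exact Nat.add_le_add_left (hpairs v) _
    _ = #(H.neighborFinset v ∪ (univ.map (g v) \ I)) := (card_union_of_disjoint hdisj).symm
    _ ≤ #(G.neighborFinset v ∩ Iᶜ) := card_le_card (union_subset hHnbr (hkept v))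

end PairGraph

end SimpleGraph

theorem Nat.cast_sub_le_div_add_one_mul {n m k : ℕ} (hm : m ≤ n) (h : n ≤ (k + 1) * m) :
    ((n - m : ℕ) : ℝ) ≤ (k : ℝ) / (k + 1) * n := by
  rw [Nat.cast_sub hm, div_mul_eq_mul_div, le_div_iff₀ (by positivity)]
  have h' : (n : ℝ) ≤ (k + 1) * m := by exact_mod_cast h
  linarith

theorem stmt8_general {V : Type*} [Fintype V] [DecidableEq V] (G : SimpleGraph V) [DecidableRel G.Adj] (a b : ℕ) (hab : a < b)
    (hd : a + b ≤ G.minDegree)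
    (hreg : ∃ H : SimpleGraph V, H ≤ G ∧ ∀ v, (H.neighborSet v).ncard = b - a) :
    ∃ S : Finset V, IsAbDom G a b S ∧
      (S.card : ℝ) ≤ ((a + b : ℕ) : ℝ) / ((a + b : ℕ) + 1) * Fintype.card V := by
  classical
  obtain ⟨H, hHG, hHreg⟩ := hreg
  have hH : ∀ v, H.degree v = b - a := fun v => by
    rw [← card_neighborFinset_eq_degree, ← Set.ncard_coe_finset, coe_neighborFinset, hHreg]
  have hroom : ∀ v, Fintype.card (Fin a × Bool) ≤ #(G.neighborFinset v \ H.neighborFinset v) :=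
    fun v => by
      have := hd.trans (G.minDegree_le_degree v)
      rw [card_neighborFinset_sdiff_of_le hHG, hH, Fintype.card_prod, Fintype.card_fin,
        Fintype.card_bool]
      omega
  choose g hg using fun v => exists_embedding_forall_mem_of_card_le (hroom v)
  have hedges := two_mul_card_edgeFinset_sup_pairGraph_le hH g
  rw [show b - a + 2 * a = a + b by omega] at hedges
  obtain ⟨I, hI, hIcard⟩ := exists_isIndepSet_of_two_mul_card_edgeFinset_le _ hedges
  refine ⟨Iᶜ, isAbDom_compl_of_isIndepSet hab.le hHG hH g hg hI, ?_⟩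
  rw [card_compl]
  exact Nat.cast_sub_le_div_add_one_mul (card_le_univ I) hIcard

theorem stmt8 {V : Type*} [Fintype V] [DecidableEq V] (G : SimpleGraph V) [DecidableRel G.Adj] (a b : ℕ) (ha : 0 < a) (hab : a < b)
    (hd : a + b ≤ G.minDegree)
    (hreg : ∃ H : SimpleGraph V, H ≤ G ∧ ∀ v, (H.neighborSet v).ncard = b - a) :
    ∃ S : Finset V, IsAbDom G a b S ∧
      (S.card : ℝ) ≤ ((a + b : ℕ) : ℝ) / ((a + b : ℕ) + 1) * Fintype.card V :=
  stmt8_general G a b hab hd hreg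
end

section
/- Let k ≥ 1 be an integer and let G be a graph with n vertices and minimum degree at least 2k−1. If G has a perfect matching, then γ_{k−1,k}(G) ≤ ((2k−1)/(2k))·n. -/
open SimpleGraph Finset

namespace Nat

theorem sub_le_choose_succ (w t : ℕ) : w - t ≤ w.choose (t + 1) := by
  induction w generalizing t with
  | zero => simp
  | succ w ih =>
    cases t with
    | zero => simp
    | succ t => have := ih t; rw [choose_succ_succ]; omega

theorem choose_succ_le_two_mul {b s : ℕ} (h : 2 * s ≤ b) :
    (b + 1).choose s ≤ 2 * b.choose s := by
  cases s with
  | zero => simp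
  | succ s =>
    have := choose_le_succ_of_lt_half_left (show s < b / 2 by omega)
    rw [choose_succ_succ']; omega

theorem two_mul_choose_le_pow {k s b : ℕ} (hk : 2 ≤ k) (hs : s + 2 ≤ k) (hb : 2 * s + 2 ≤ b) :
    2 * b.choose s ≤ k ^ (b - s - 1) := by
  induction b, hb using le_induction with
  | base =>
    rw [show 2 * s + 2 - s - 1 = s + 1 by omega]
    rcases le_or_gt 4 k with hk4 | hk4
    · calc 2 * (2 * s + 2).choose s ≤ 2 * (2 * (2 * s + 1).choose s) := by
            gcongr; exact choose_succ_le_two_mul (by omega)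
        _ ≤ 4 * 4 ^ s := by have := choose_middle_le_pow s; omega
        _ ≤ k ^ (s + 1) := by rw [← pow_succ']; exact pow_le_pow_left₀ (by omega) hk4 _
    · obtain rfl | ⟨rfl, rfl⟩ : s = 0 ∨ s = 1 ∧ k = 3 := by omega
      · simpa using hk
      · decide
  | succ b hb ih =>
    calc 2 * (b + 1).choose s ≤ 2 * (2 * b.choose s) := by
          gcongr; exact choose_succ_le_two_mul (by omega)
      _ ≤ k * k ^ (b - s - 1) := by nlinarith
      _ = k ^ (b + 1 - s - 1) := by rw [← pow_succ']; congr 1; omega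

theorem two_mul_mul_choose_le_pow {k b j : ℕ} (h₁ : b + 2 ≤ 2 * j) (h₂ : b + 2 ≤ k + j) :
    2 * k * b.choose j ≤ k ^ j := by
  rcases lt_or_ge b j with hbj | hjb
  · simp [choose_eq_zero_of_lt hbj]
  have hk : 2 ≤ k := by omega
  calc 2 * k * b.choose j = k * (2 * b.choose (b - j)) := by rw [choose_symm hjb]; ring
    _ ≤ k * k ^ (b - (b - j) - 1) := by
        gcongr; exact two_mul_choose_le_pow hk (by omega) (by omega)
    _ = k ^ j := by rw [← pow_succ']; congr 1; omega

end Nat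

theorem Fintype.card_filter_forall_eq_mul_pow {α β : Type*} [Fintype α] [DecidableEq α]
    [Fintype β] [DecidableEq β] (C : Finset α) (g : α → β) :
    #{f : α → β | ∀ a ∈ C, f a = g a} * Fintype.card β ^ #C =
      Fintype.card β ^ Fintype.card α := by
  have hfilter : ({f : α → β | ∀ a ∈ C, f a = g a} : Finset (α → β)) =
      Fintype.piFinset fun a => if a ∈ C then {g a} else univ := by
    ext f
    simp only [mem_filter, mem_univ, true_and, Fintype.mem_piFinset]
    refine forall_congr' fun a => ?_
    split_ifs with ha <;> simp [ha]
  have hpow : Fintype.card β ^ #C = ∏ a, if a ∈ C then Fintype.card β else 1 := by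
    rw [prod_ite_mem, prod_const]
  rw [hfilter, Fintype.card_piFinset, hpow, ← prod_mul_distrib, ← Finset.card_univ (α := α),
    ← prod_const]
  refine Finset.prod_congr rfl fun a _ => ?_
  split_ifs <;> simp

section PairFree

variable {V : Type*} {p : V → V}

def PairFree (p : V → V) (T : Finset V) : Prop := ∀ u ∈ T, p u ∉ T

theorem PairFree.mono {S T : Finset V} (hT : PairFree p T) (hST : S ⊆ T) : PairFree p S :=
  fun _ hu hpu => hT _ (hST hu) (hST hpu)

variable [DecidableEq V]

theorem PairFree.card_inter_le_card_sdiff {D X : Finset V} (hD : PairFree p D)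
    (hp : p.Injective) (hX : ∀ u ∈ X, p u ∈ X) : #(X ∩ D) ≤ #(X \ D) :=
  card_le_card_of_injOn p (fun u hu => by
    simp only [coe_inter, Set.mem_inter_iff, mem_coe, coe_sdiff, Set.mem_sdiff] at hu ⊢
    exact ⟨hX u hu.1, hD u hu.2⟩) hp.injOn

theorem pairFree_filter_apply_notMem (E : Finset V) : PairFree p {u ∈ E | p u ∉ E} := by
  intro u hu hpu
  simp only [mem_filter] at hu hpu
  exact hu.2 hpu.1

theorem PairFree.card_add_card_filter_le {D : Finset V} (hD : PairFree p D)
    (hp : p.Involutive) (E : Finset V) :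
    #E + #{u ∈ E | p u ∉ E} ≤ 2 * #(E \ D) + 2 * #({u ∈ E | p u ∉ E} ∩ D) := by
  set S := {u ∈ E | p u ∉ E}
  set P := {u ∈ E | p u ∈ E}
  have hP : #(P ∩ D) ≤ #(P \ D) :=
    hD.card_inter_le_card_sdiff hp.injective fun u hu => by
      simp only [P, mem_filter] at hu ⊢
      exact ⟨hu.2, by rw [hp u]; exact hu.1⟩
  have hE : #S + #P = #E := by
    rw [add_comm]; exact card_filter_add_card_filter_not _
  have hED : #(S \ D) + #(P \ D) = #(E \ D) := by
    rw [← card_union_of_disjoint]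
    · congr 1; ext u; simp only [S, P, mem_union, mem_sdiff, mem_filter]; tauto
    · exact (disjoint_filter_filter_not E E _).symm.mono sdiff_subset sdiff_subset
  have hS := card_inter_add_card_sdiff S D
  have hP' := card_inter_add_card_sdiff P D
  omega

end PairFree

theorem Finset.exists_subset_le_card_sdiff {α ι : Type*} [DecidableEq α] [Fintype ι]
    (D : Finset α) (E : ι → Finset α) {m : ℕ} (hE : ∀ i, m ≤ #(E i)) :
    ∃ D' ⊆ D, (∀ i, m ≤ #(E i \ D')) ∧ #D ≤ #D' + ∑ i, (m - #(E i \ D)) := by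
  have hB : ∀ i, ∃ B ⊆ E i ∩ D, #B = m - #(E i \ D) := fun i =>
    exists_subset_card_eq (by have := card_inter_add_card_sdiff (E i) D; have := hE i; omega)
  choose B hBsub hBcard using hB
  refine ⟨D \ univ.biUnion B, sdiff_subset, fun i => ?_, ?_⟩
  · have hdisj : Disjoint (E i \ D) (B i) :=
      disjoint_left.2 fun u hu huB => (mem_sdiff.1 hu).2 (mem_inter.1 (hBsub i huB)).2
    have hsub : E i \ D ∪ B i ⊆ E i \ (D \ univ.biUnion B) := by
      intro u hu
      rcases mem_union.1 hu with hu | hu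
      · exact mem_sdiff.2 ⟨(mem_sdiff.1 hu).1, fun h => (mem_sdiff.1 hu).2 (mem_sdiff.1 h).1⟩
      · exact mem_sdiff.2 ⟨(mem_inter.1 (hBsub i hu)).1,
          fun h => (mem_sdiff.1 h).2 (mem_biUnion.2 ⟨i, mem_univ i, hu⟩)⟩
    have := card_le_card hsub
    rw [card_union_of_disjoint hdisj, hBcard] at this
    omega
  · have h₁ := le_card_sdiff (univ.biUnion B) D
    have h₂ : #(univ.biUnion B) ≤ ∑ i, (m - #(E i \ D)) := card_biUnion_le.trans_eq <| by
      simp only [hBcard]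
    omega

section Sampling

variable {V Ω : Type*} [DecidableEq V] [Fintype Ω]

/-- `D` is a random pair-free set over the uniform probability space `Ω`, containing each
pair-free set `T` with probability `k ^ (-#T)`. -/
def IsPairFreeSampling (p : V → V) (k : ℕ) (D : Ω → Finset V) : Prop :=
  (∀ ω, PairFree p (D ω)) ∧ ∀ T, PairFree p T → #{ω | T ⊆ D ω} * k ^ #T = Fintype.card Ω

variable {p : V → V} {k : ℕ} {D : Ω → Finset V}

theorem IsPairFreeSampling.sum_card_mul [Fintype V] (hD : IsPairFreeSampling p k D)
    (hp : ∀ v, p v ≠ v) :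
    (∑ ω, #(D ω)) * k = Fintype.card V * Fintype.card Ω := by
  have hdouble := sum_card_bipartiteAbove_eq_sum_card_bipartiteBelow
    (s := (univ : Finset Ω)) (t := (univ : Finset V)) (r := fun ω v => v ∈ D ω)
  simp only [bipartiteAbove, bipartiteBelow, filter_univ_mem] at hdouble
  rw [hdouble, sum_mul, ← smul_eq_mul, ← card_univ, ← sum_const]
  refine Finset.sum_congr rfl fun v _ => ?_
  simpa using hD.2 {v} (by simpa [PairFree] using hp v)

theorem IsPairFreeSampling.sum_choose_card_inter_mul (hD : IsPairFreeSampling p k D)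
    {S : Finset V} (hS : PairFree p S) (j : ℕ) :
    (∑ ω, (#(S ∩ D ω)).choose j) * k ^ j = (#S).choose j * Fintype.card Ω := by
  have hdouble := sum_card_bipartiteAbove_eq_sum_card_bipartiteBelow
    (s := (univ : Finset Ω)) (t := powersetCard j S) (r := fun ω T => T ⊆ D ω)
  have hchoose : ∀ ω, (#(S ∩ D ω)).choose j =
      #((powersetCard j S).bipartiteAbove (fun ω T => T ⊆ D ω) ω) := fun ω => by
    rw [← card_powersetCard, bipartiteAbove]
    congr 1; ext T; simp only [mem_powersetCard, mem_filter, subset_inter_iff]; tauto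
  simp_rw [hchoose]
  rw [hdouble, sum_mul, ← card_powersetCard, ← smul_eq_mul, ← sum_const]
  refine Finset.sum_congr rfl fun T hT => ?_
  rw [mem_powersetCard] at hT
  rw [bipartiteBelow, ← hT.2]
  exact hD.2 T (hS.mono hT.1)

theorem IsPairFreeSampling.two_mul_mul_sum_sub_card_sdiff_le (hD : IsPairFreeSampling p k D)
    (hp : p.Involutive) (hk : 0 < k) (E : Finset V) (hE : 2 * k - 2 ≤ #E) :
    2 * k * ∑ ω, (k - 1 - #(E \ D ω)) ≤ Fintype.card Ω := by
  set S := {u ∈ E | p u ∉ E}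
  set j := (#E + #S + 1) / 2 + 2 - k
  have hSE : #S ≤ #E := card_filter_le _ _
  -- The deficiency is at most `#(S ∩ D ω) - (j - 1)`, which is dominated by a binomial
  -- coefficient whose mean is computable.
  have hpoint : ∀ ω, k - 1 - #(E \ D ω) ≤ (#(S ∩ D ω)).choose j := fun ω => by
    have h₁ : #E + #S ≤ 2 * #(E \ D ω) + 2 * #(S ∩ D ω) :=
      (hD.1 ω).card_add_card_filter_le hp E
    have h₂ := Nat.sub_le_choose_succ (#(S ∩ D ω)) (j - 1)
    rw [show j - 1 + 1 = j by omega] at h₂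
    omega
  have hchoose : 2 * k * (#S).choose j ≤ k ^ j :=
    Nat.two_mul_mul_choose_le_pow (by omega) (by omega)
  refine le_of_mul_le_mul_right ?_ (pow_pos hk j)
  calc 2 * k * (∑ ω, (k - 1 - #(E \ D ω))) * k ^ j
      ≤ 2 * k * ((∑ ω, (#(S ∩ D ω)).choose j) * k ^ j) := by
        rw [mul_assoc]; gcongr with ω; exact hpoint ω
    _ = 2 * k * (#S).choose j * Fintype.card Ω := by
        rw [hD.sum_choose_card_inter_mul (pairFree_filter_apply_notMem E) j]; ring
    _ ≤ Fintype.card Ω * k ^ j := by rw [mul_comm _ (k ^ j)]; gcongr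

end Sampling

section Averaging

variable {V Ω : Type*} [Fintype V] [DecidableEq V] [Fintype Ω] [Nonempty Ω]
  {p : V → V} {k : ℕ} {D : Ω → Finset V}

theorem IsPairFreeSampling.exists_pairFree_le_card_sdiff (hD : IsPairFreeSampling p k D)
    (hp : p.Involutive) (hfix : ∀ v, p v ≠ v) (hk : 0 < k) (E : V → Finset V)
    (hE : ∀ v, 2 * k - 2 ≤ #(E v)) :
    ∃ D', PairFree p D' ∧ (∀ v, k - 1 ≤ #(E v \ D')) ∧ Fintype.card V ≤ 2 * k * #D' := by
  choose D' hD'sub hD'E hD'card using fun ω =>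
    (D ω).exists_subset_le_card_sdiff E (m := k - 1) fun v => by have := hE v; omega
  have hsize := hD.sum_card_mul hfix
  have hrepair : ∑ ω, #(D ω) ≤ ∑ ω, #(D' ω) + ∑ v, ∑ ω, (k - 1 - #(E v \ D ω)) := by
    rw [sum_comm, ← sum_add_distrib]; exact sum_le_sum fun ω _ => hD'card ω
  have hdeficit :
      2 * k * ∑ v, ∑ ω, (k - 1 - #(E v \ D ω)) ≤ Fintype.card V * Fintype.card Ω := by
    rw [mul_sum]
    refine (sum_le_sum fun v _ =>
      hD.two_mul_mul_sum_sub_card_sdiff_le hp hk (E v) (hE v)).trans_eq ?_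
    rw [sum_const, card_univ, smul_eq_mul]
  obtain ⟨ω, -, hω⟩ : ∃ ω ∈ univ, Fintype.card V ≤ 2 * k * #(D' ω) := by
    refine exists_le_of_sum_le univ_nonempty ?_
    rw [sum_const, card_univ, smul_eq_mul, ← mul_sum]
    have := Nat.mul_le_mul_left (2 * k) hrepair
    linarith
  exact ⟨D' ω, (hD.1 ω).mono (hD'sub ω), hD'E ω, hω⟩

end Averaging

theorem Function.Involutive.exists_finset_apply_mem_iff_notMem {V : Type*} [Fintype V]
    {p : V → V} (hp : p.Involutive) (hfix : ∀ v, p v ≠ v) :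
    ∃ A : Finset V, ∀ v, p v ∈ A ↔ v ∉ A := by
  let e := Fintype.equivFin V
  refine ⟨({v | e v < e (p v)} : Finset V), fun v => ?_⟩
  have hne : e (p v) ≠ e v := e.injective.ne (hfix v)
  simp only [mem_filter, mem_univ, true_and, hp v, not_lt]
  exact ⟨le_of_lt, fun h => lt_of_le_of_ne h hne⟩

theorem exists_isPairFreeSampling {V : Type*} [Fintype V] [DecidableEq V] {p : V → V}
    (hp : p.Involutive) (hfix : ∀ v, p v ≠ v) {k : ℕ} (hk : 2 ≤ k) :
    ∃ D : (V → Fin k) → Finset V, IsPairFreeSampling p k D := by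
  obtain ⟨A, hA⟩ := hp.exists_finset_apply_mem_iff_notMem hfix
  -- The pair `{v, p v}` is represented by its vertex in `A`; the value of `ω` there decides
  -- which end of the pair, if any, lies in the sample.
  let rep : V → V := fun v => if v ∈ A then v else p v
  let val : V → Fin k := fun v => if v ∈ A then ⟨0, by omega⟩ else ⟨1, by omega⟩
  have hrep_pair : ∀ v, rep (p v) = rep v := fun v => by
    by_cases hv : v ∈ A <;> simp [rep, hv, hA, hp v]
  have hval_pair : ∀ v, val (p v) ≠ val v := fun v => by
    by_cases hv : v ∈ A <;> simp [val, hv, hA]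
  have hrep : ∀ v, rep v = v ∨ rep v = p v := fun v => by
    by_cases hv : v ∈ A <;> simp [rep, hv]
  refine ⟨fun ω => ({v | ω (rep v) = val v} : Finset V), fun ω v hv hpv => ?_, fun T hT => ?_⟩
  · simp only [mem_filter, mem_univ, true_and] at hv hpv
    rw [hrep_pair, hv] at hpv
    exact hval_pair v hpv.symm
  let g : V → Fin k := fun c => if c ∈ T then val c else val (p c)
  have hg : ∀ u ∈ T, g (rep u) = val u := fun u hu => by
    rcases hrep u with h | h <;> simp [g, h, hu, hT u hu, hp u]
  have hinj : Set.InjOn rep T := fun u hu w hw h => by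
    have : w = u ∨ w = p u := by
      rcases hrep u with hu' | hu' <;> rcases hrep w with hw' | hw' <;> rw [hu', hw'] at h
      exacts [Or.inl h.symm, Or.inr (by rw [h, hp]), Or.inr h.symm, Or.inl (hp.injective h).symm]
    rcases this with rfl | rfl
    · rfl
    · exact absurd hw (hT u hu)
  have hmem : ∀ ω : V → Fin k,
      T ⊆ ({v | ω (rep v) = val v} : Finset V) ↔ ∀ c ∈ T.image rep, ω c = g c := fun ω => by
    simp only [subset_iff, mem_filter, mem_univ, true_and, forall_mem_image]
    exact forall₂_congr fun u hu => by rw [hg u hu]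
  beta_reduce
  rw [filter_congr fun ω _ => hmem ω, ← card_image_of_injOn hinj]
  simpa using Fintype.card_filter_forall_eq_mul_pow (T.image rep) g

theorem Function.Involutive.exists_pairFree_le_card_sdiff {V : Type*} [Fintype V]
    [DecidableEq V] {p : V → V} (hp : p.Involutive) (hfix : ∀ v, p v ≠ v) {k : ℕ} (hk : 1 ≤ k)
    (E : V → Finset V) (hE : ∀ v, 2 * k - 2 ≤ #(E v)) :
    ∃ D, PairFree p D ∧ (∀ v, k - 1 ≤ #(E v \ D)) ∧ Fintype.card V ≤ 2 * k * #D := by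
  obtain rfl | hk : k = 1 ∨ 2 ≤ k := by omega
  · obtain ⟨A, hA⟩ := hp.exists_finset_apply_mem_iff_notMem hfix
    have himage : A.image p = univ \ A := by
      ext v
      rw [mem_image, mem_sdiff, ← hA]
      exact ⟨fun ⟨u, hu, huv⟩ => by simpa [← huv, hp u] using hu,
        fun h => ⟨p v, h.2, hp v⟩⟩
    have hcard := card_univ_sdiff A
    rw [← himage, card_image_of_injective A hp.injective] at hcard
    refine ⟨A, fun u hu hpu => (hA u).1 hpu hu, fun v => by simp, ?_⟩
    have := card_le_univ A
    omega
  · obtain ⟨D, hD⟩ := exists_isPairFreeSampling hp hfix hk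
    have : Nonempty (V → Fin k) := ⟨fun _ => ⟨0, by omega⟩⟩
    exact hD.exists_pairFree_le_card_sdiff hp hfix (by omega) E hE

theorem SimpleGraph.Subgraph.IsPerfectMatching.exists_involutive_adj {V : Type*}
    {G : SimpleGraph V} {M : G.Subgraph} (hM : M.IsPerfectMatching) :
    ∃ p : V → V, p.Involutive ∧ ∀ v, G.Adj v (p v) := by
  have h := M.isPerfectMatching_iff.1 hM
  choose p hp using fun v => (h v).exists
  exact ⟨p, fun v => (h (p v)).unique (hp (p v)) (hp v).symm, fun v => M.adj_sub (hp v)⟩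

theorem isAbDom_univ_sdiff {V : Type*} [Fintype V] [DecidableEq V] {G : SimpleGraph V}
    [DecidableRel G.Adj] {p : V → V} (hadj : ∀ v, G.Adj v (p v)) {k : ℕ} {D : Finset V}
    (hD : PairFree p D) (hDE : ∀ v, k - 1 ≤ #((G.neighborFinset v).erase (p v) \ D)) :
    IsAbDom G (k - 1) k (univ \ D) := by
  have hsub : ∀ v, (G.neighborFinset v).erase (p v) \ D ⊆ G.neighborFinset v ∩ (univ \ D) :=
    fun v u hu => by
      simp only [mem_sdiff, mem_erase] at hu
      simp [hu.1.2, hu.2]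
  refine ⟨fun v _ => (hDE v).trans (card_le_card (hsub v)), fun v hv => ?_⟩
  have hvD : v ∈ D := by simpa using hv
  have hins : insert (p v) ((G.neighborFinset v).erase (p v) \ D) ⊆
      G.neighborFinset v ∩ (univ \ D) :=
    insert_subset (by simpa using ⟨hadj v, hD v hvD⟩) (hsub v)
  have := card_le_card hins
  rw [card_insert_of_notMem (fun h => notMem_erase _ _ (mem_sdiff.1 h).1)] at this
  have := hDE v
  omega

theorem stmt9 {V : Type*} [Fintype V] [DecidableEq V] (G : SimpleGraph V) [DecidableRel G.Adj] (k : ℕ) (hk : 1 ≤ k) (hd : 2 * k - 1 ≤ G.minDegree)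
    (hpm : ∃ M : G.Subgraph, M.IsPerfectMatching) :
    ∃ S : Finset V, IsAbDom G (k - 1) k S ∧
      (S.card : ℝ) ≤ ((2 * k - 1 : ℕ) : ℝ) / (2 * k) * Fintype.card V := by
  obtain ⟨M, hM⟩ := hpm
  obtain ⟨p, hp, hadj⟩ := hM.exists_involutive_adj
  have hE : ∀ v, 2 * k - 2 ≤ #((G.neighborFinset v).erase (p v)) := fun v => by
    rw [card_erase_of_mem ((G.mem_neighborFinset _ _).2 (hadj v)), card_neighborFinset_eq_degree]
    have := G.minDegree_le_degree v
    omega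
  obtain ⟨D, hD, hDE, hcard⟩ :=
    hp.exists_pairFree_le_card_sdiff (fun v => (hadj v).ne') hk _ hE
  refine ⟨univ \ D, isAbDom_univ_sdiff hadj hD hDE, ?_⟩
  have hcard' : (Fintype.card V : ℝ) ≤ 2 * k * #D := by exact_mod_cast hcard
  rw [card_univ_sdiff, Nat.cast_sub (card_le_univ D), Nat.cast_sub (by omega : 1 ≤ 2 * k),
    div_mul_eq_mul_div, le_div_iff₀ (by positivity)]
  push_cast
  linarith
end

section
/- Let G be a graph on n vertices with minimum degree at least max(a,b), where a and b are positive integers. Suppose G' is a graph on the same vertex set such that for every independent set A of G', the complement V(G) \ A is an (a,b)-dominating set of G. If G' has at most α·n edges, then γ_{a,b}(G) ≤ (2α/(2α+1))·n. -/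
open SimpleGraph Finset

/-- Caro–Wei: every finset `s` contains an independent set `A` with
`∑_{v∈s} 1/(deg_s v + 1) ≤ |A|`. -/
lemma caroWei {V : Type*} [Fintype V] [DecidableEq V] (H : SimpleGraph V)
    [DecidableRel H.Adj] (s : Finset V) :
    ∃ A ⊆ s, (∀ v ∈ A, ∀ w ∈ A, v ≠ w → ¬ H.Adj v w) ∧
      ∑ v ∈ s, (1 : ℝ) / ((H.neighborFinset v ∩ s).card + 1) ≤ A.card := by
  induction s using Finset.strongInduction with
  | _ s ih =>
    rcases s.eq_empty_or_nonempty with rfl | hs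
    · exact ⟨∅, by simp⟩
    · obtain ⟨v, hvs, hvmin⟩ := s.exists_min_image
        (fun v => (H.neighborFinset v ∩ s).card) hs
      set d : ℕ := (H.neighborFinset v ∩ s).card with hd
      set R : Finset V := insert v (H.neighborFinset v ∩ s) with hR
      have hRs : R ⊆ s := by
        rw [hR]; exact insert_subset hvs (inter_subset_right)
      have hvR : v ∈ R := mem_insert_self _ _
      have hcardR : R.card = d + 1 := by
        rw [hR, card_insert_of_notMem (by simp)]
      set s' : Finset V := s \ R with hs'
      have hss : s' ⊂ s := by
        refine Finset.ssubset_iff_of_subset (sdiff_subset) |>.mpr ⟨v, hvs, by simp [hs', hvR]⟩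
      obtain ⟨A', hA's, hA'ind, hA'sum⟩ := ih s' hss
      have hvA' : v ∉ A' := fun h => (mem_sdiff.mp (hA's h)).2 hvR
      refine ⟨insert v A', insert_subset hvs (hA's.trans sdiff_subset), ?_, ?_⟩
      · intro x hx y hy hxy
        have key : ∀ u ∈ A', ¬ H.Adj v u := by
          intro u hu hadj
          have : u ∈ R := by
            rw [hR]
            exact mem_insert_of_mem (mem_inter.mpr ⟨(mem_neighborFinset _ _ _).mpr hadj,
              (sdiff_subset (hA's hu))⟩)
          exact (mem_sdiff.mp (hA's hu)).2 this
        rcases mem_insert.mp hx with hx | hx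
        · rcases mem_insert.mp hy with hy | hy
          · exact absurd (hx.trans hy.symm) hxy
          · exact fun h => key y hy (hx ▸ h)
        · rcases mem_insert.mp hy with hy | hy
          · exact fun h => key x hx ((hy ▸ h).symm)
          · exact hA'ind x hx y hy hxy
      · rw [card_insert_of_notMem hvA']
        push_cast
        have hsplit : ∑ u ∈ s, (1 : ℝ) / ((H.neighborFinset u ∩ s).card + 1)
            = ∑ u ∈ s', (1 : ℝ) / ((H.neighborFinset u ∩ s).card + 1)
              + ∑ u ∈ R, (1 : ℝ) / ((H.neighborFinset u ∩ s).card + 1) := by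
          rw [hs', sum_sdiff hRs]
        rw [hsplit]
        have h1 : ∑ u ∈ R, (1 : ℝ) / ((H.neighborFinset u ∩ s).card + 1) ≤ 1 := by
          have : ∀ u ∈ R, (1 : ℝ) / ((H.neighborFinset u ∩ s).card + 1)
              ≤ 1 / (d + 1) := by
            intro u hu
            apply one_div_le_one_div_of_le (by positivity)
            have := hvmin u (hRs hu)
            push_cast
            linarith [(Nat.cast_le (α := ℝ)).mpr this]
          calc ∑ u ∈ R, (1 : ℝ) / ((H.neighborFinset u ∩ s).card + 1)
              ≤ ∑ _u ∈ R, (1 : ℝ) / (d + 1) := sum_le_sum this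
            _ = (d + 1) * (1 / (d + 1)) := by rw [sum_const, hcardR]; push_cast; ring
            _ = 1 := by field_simp
        have h2 : ∑ u ∈ s', (1 : ℝ) / ((H.neighborFinset u ∩ s).card + 1)
            ≤ ∑ u ∈ s', (1 : ℝ) / ((H.neighborFinset u ∩ s').card + 1) := by
          apply sum_le_sum
          intro u hu
          apply one_div_le_one_div_of_le (by positivity)
          have hmono : (H.neighborFinset u ∩ s').card ≤ (H.neighborFinset u ∩ s).card :=
            card_le_card (inter_subset_inter le_rfl (by rw [hs']; exact sdiff_subset))
          have := (Nat.cast_le (α := ℝ)).mpr hmono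
          linarith
        linarith

theorem stmt10 {V : Type*} [Fintype V] [DecidableEq V] (G : SimpleGraph V) [DecidableRel G.Adj] (G' : SimpleGraph V) [DecidableRel G'.Adj]
    (a b : ℕ) (ha : 0 < a) (hb : 0 < b) (hd : max a b ≤ G.minDegree) (α : ℝ) (hα : 0 < α)
    (hdom : ∀ A : Finset V, (∀ v ∈ A, ∀ w ∈ A, v ≠ w → ¬ G'.Adj v w) →
      IsAbDom G a b (univ \ A))
    (hE : (G'.edgeFinset.card : ℝ) ≤ α * Fintype.card V) :
    ∃ S : Finset V, IsAbDom G a b S ∧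
      (S.card : ℝ) ≤ 2 * α / (2 * α + 1) * Fintype.card V := by
  obtain ⟨A, hAsub, hAind, hAsum⟩ := caroWei G' univ
  simp only [inter_univ, card_neighborFinset_eq_degree] at hAsum
  refine ⟨univ \ A, hdom A hAind, ?_⟩
  set n : ℕ := Fintype.card V with hn
  have hAn : A.card ≤ n := by rw [hn, ← card_univ]; exact card_le_card hAsub
  have hcard : (univ \ A).card = n - A.card := by
    rw [card_sdiff_of_subset (subset_univ A), card_univ]
  have hsumdeg : ∑ v : V, ((G'.degree v : ℝ) + 1) = 2 * G'.edgeFinset.card + n := by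
    rw [Finset.sum_add_distrib]
    push_cast
    rw [← Nat.cast_sum]
    rw [G'.sum_degrees_eq_twice_card_edges]
    simp [hn, card_univ]
  have hCS : (n : ℝ) ^ 2 ≤ (2 * G'.edgeFinset.card + n) * A.card := by
    have key := Finset.sum_sq_le_sum_mul_sum_of_sq_eq_mul (univ : Finset V)
      (r := fun _ => (1 : ℝ)) (f := fun v => (G'.degree v : ℝ) + 1)
      (g := fun v => 1 / ((G'.degree v : ℝ) + 1))
      (fun i _ => by positivity) (fun i _ => by positivity)
      (fun i _ => by field_simp)
    simp only [Finset.sum_const, card_univ, nsmul_eq_mul, mul_one] at key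
    calc (n : ℝ) ^ 2 ≤ (∑ v : V, ((G'.degree v : ℝ) + 1)) *
          ∑ v : V, 1 / ((G'.degree v : ℝ) + 1) := key
      _ ≤ (2 * G'.edgeFinset.card + n) * A.card := by
          rw [hsumdeg]
          have hpos : (0:ℝ) ≤ 2 * G'.edgeFinset.card + n := by positivity
          have hsum0 : (0:ℝ) ≤ ∑ v : V, 1 / ((G'.degree v : ℝ) + 1) := by positivity
          exact mul_le_mul le_rfl hAsum hsum0 hpos
  have h2a : (0:ℝ) < 2 * α + 1 := by linarith
  rcases Nat.eq_zero_or_pos n with h0 | hnpos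
  · have : (univ \ A).card = 0 := by omega
    rw [this, h0]
    simp
  · have hnR : (0:ℝ) < n := by exact_mod_cast hnpos
    have hkey : (n : ℝ) ≤ (2 * α + 1) * A.card := by
      have : (n : ℝ) ^ 2 ≤ (2 * α + 1) * A.card * n := by
        calc (n : ℝ) ^ 2 ≤ (2 * G'.edgeFinset.card + n) * A.card := hCS
          _ ≤ (2 * (α * n) + n) * A.card := by
              have : (0:ℝ) ≤ (A.card : ℝ) := by positivity
              nlinarith
          _ = (2 * α + 1) * A.card * n := by ring
      nlinarith
    rw [hcard]
    have hcast : ((n - A.card : ℕ) : ℝ) = (n : ℝ) - A.card := by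
      push_cast [Nat.cast_sub hAn]; ring
    rw [hcast, div_mul_eq_mul_div, le_div_iff₀ h2a]
    nlinarith
end

section
/- For every graph G with n vertices that is K_{r+1}-free, the number of edges of G is at most (1 − 1/r)·n²/2. -/
open SimpleGraph Finset

/-! A `K_{r+1}`-free graph has at most as many edges as a Turán-maximal graph on the same vertex
set, which is isomorphic to the Turán graph `T(n, r)`; counting the edges of `T(n, r)` part by part
gives `2 r e ≤ (r - 1) n²`. -/

namespace SimpleGraph

theorem CliqueFree.two_mul_mul_card_edgeFinset_le {V : Type*} [Fintype V] {G : SimpleGraph V}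
    [DecidableRel G.Adj] {r : ℕ} (hr : 0 < r) (hfree : G.CliqueFree (r + 1)) :
    2 * r * #G.edgeFinset ≤ (r - 1) * Fintype.card V ^ 2 := by
  obtain ⟨H, _, hH⟩ := exists_isTuranMaximal (V := V) hr
  obtain ⟨e⟩ := (isTuranMaximal_iff_nonempty_iso_turanGraph hr).mp hH
  calc 2 * r * #G.edgeFinset ≤ 2 * r * #H.edgeFinset := Nat.mul_le_mul_left _ (hH.2 hfree)
    _ = 2 * r * #(turanGraph (Fintype.card V) r).edgeFinset := by rw [e.card_edgeFinset_eq]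
    _ ≤ (r - 1) * Fintype.card V ^ 2 := mul_card_edgeFinset_turanGraph_le

end SimpleGraph

theorem stmt11_general {V : Type*} [Fintype V] (G : SimpleGraph V) [DecidableRel G.Adj] (r : ℕ) (hr : 0 < r) (hfree : G.CliqueFree (r + 1)) :
    (G.edgeFinset.card : ℝ) ≤ (1 - 1 / r) * (Fintype.card V : ℝ) ^ 2 / 2 := by
  have hedges := (Nat.cast_le (α := ℝ)).mpr (hfree.two_mul_mul_card_edgeFinset_le hr)
  push_cast [Nat.cast_sub (show 1 ≤ r from hr)] at hedges
  have hrR : (0 : ℝ) < r := by exact_mod_cast hr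
  rw [le_div_iff₀ two_pos, one_sub_div hrR.ne', div_mul_eq_mul_div, le_div_iff₀ hrR]
  linarith

theorem stmt11 {V : Type*} [Fintype V] [DecidableEq V] (G : SimpleGraph V) [DecidableRel G.Adj] (r : ℕ) (hr : 0 < r) (hfree : G.CliqueFree (r + 1)) :
    (G.edgeFinset.card : ℝ) ≤ (1 - 1 / r) * (Fintype.card V : ℝ) ^ 2 / 2 :=
  stmt11_general G r hr hfree
end

section
/- Let G be a graph with n vertices, minimum degree at least 3, and suppose that for each vertex v of G three neighbors are chosen and all pairs among them are joined, forming a graph G' on V(G). Then any maximal independent set A of G' satisfies: for every vertex v of G, at most one of its three chosen neighbors lies in A, so V(G) \ A is a (2,2)-dominating set of G. -/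
open SimpleGraph Finset

theorem stmt12 {V : Type*} [Fintype V] [DecidableEq V] (G : SimpleGraph V) [DecidableRel G.Adj] (hd : 3 ≤ G.minDegree)
    (N : V → Finset V) (hN3 : ∀ v, (N v).card = 3)
    (hNnbr : ∀ v, N v ⊆ G.neighborFinset v)
    (G' : SimpleGraph V)
    (hG' : ∀ x y, G'.Adj x y ↔ x ≠ y ∧ ∃ v, x ∈ N v ∧ y ∈ N v)
    [DecidableRel G'.Adj]
    (A : Finset V)
    (hind : ∀ v ∈ A, ∀ w ∈ A, v ≠ w → ¬ G'.Adj v w)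
    (hmax : ∀ B : Finset V, A ⊆ B → (∀ v ∈ B, ∀ w ∈ B, v ≠ w → ¬ G'.Adj v w) → B = A) :
    (∀ v, (N v ∩ A).card ≤ 1) ∧ IsAbDom G 2 2 (univ \ A) := by
  have h1 : ∀ v, (N v ∩ A).card ≤ 1 := by
    intro v
    by_contra h
    push_neg at h
    obtain ⟨x, hx, y, hy, hxy⟩ := Finset.one_lt_card.mp h
    simp only [Finset.mem_inter] at hx hy
    exact hind x hx.2 y hy.2 hxy ((hG' x y).mpr ⟨hxy, v, hx.1, hy.1⟩)
  refine ⟨h1, ?_, ?_⟩ <;>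
  · intro v _
    have hsub : N v \ A ⊆ G.neighborFinset v ∩ (univ \ A) := by
      intro x hx
      simp only [Finset.mem_sdiff, Finset.mem_inter, Finset.mem_univ, true_and] at hx ⊢
      exact ⟨hNnbr v hx.1, hx.2⟩
    have hcard := Finset.card_inter_add_card_sdiff (N v) A
    have h2 : 2 ≤ (N v \ A).card := by
      have := h1 v
      have := hN3 v
      omega
    exact le_trans h2 (Finset.card_le_card hsub)
end

section
/- If G is a graph on n vertices with minimum degree at least 13, then γ_{1,2}(G) ≤ n/2. -/
open SimpleGraph Finset

section Stmt15Aux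

set_option linter.unusedSectionVars false

variable {V : Type*} [Fintype V] [DecidableEq V]

noncomputable def wgt (S : Finset V) : ℝ := (2/5) ^ S.card * (3/5) ^ ((univ \ S).card)

lemma wgt_pos (S : Finset V) : 0 < wgt S := by unfold wgt; positivity

lemma sum_aux (s : Finset V) :
    ∑ t ∈ s.powerset, (2/5 : ℝ) ^ t.card * (3/5 : ℝ) ^ ((s \ t).card) = 1 := by
  have h := Finset.prod_add (fun _ : V => (2/5 : ℝ)) (fun _ => (3/5 : ℝ)) s
  simp only [prod_const] at h
  norm_num at h
  rw [← h]

lemma sum_wgt : ∑ S ∈ (univ : Finset V).powerset, wgt S = 1 := sum_aux univ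

lemma sum_wgt_inter_empty (F : Finset V) :
    ∑ S ∈ (univ : Finset V).powerset, (if S ∩ F = ∅ then wgt S else 0)
      = (3/5 : ℝ) ^ F.card := by
  rw [← Finset.sum_filter]
  have hfil : (univ : Finset V).powerset.filter (fun S => S ∩ F = ∅) = (univ \ F).powerset := by
    ext A
    simp [Finset.subset_sdiff, ← Finset.disjoint_iff_inter_eq_empty]
  rw [hfil]
  have hcong : ∀ S ∈ (univ \ F).powerset, wgt S
      = (3/5 : ℝ) ^ F.card * ((2/5) ^ S.card * (3/5) ^ (((univ \ F) \ S).card)) := by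
    intro S hS
    rw [mem_powerset, Finset.subset_sdiff] at hS
    have hsplit : (univ : Finset V) \ S = ((univ \ F) \ S) ∪ F := by
      ext x
      simp only [mem_sdiff, mem_union, mem_univ, true_and]
      constructor
      · intro hx
        by_cases hxF : x ∈ F
        · exact Or.inr hxF
        · exact Or.inl ⟨hxF, hx⟩
      · rintro (⟨_, hx⟩ | hxF)
        · exact hx
        · exact fun hxS => (Finset.disjoint_left.mp hS.2) hxS hxF
    have hdisj : Disjoint ((univ \ F) \ S) F := by
      refine Finset.disjoint_left.mpr ?_
      intro a ha haF
      exact (mem_sdiff.mp (mem_sdiff.mp ha).1).2 haF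
    unfold wgt
    rw [hsplit, Finset.card_union_of_disjoint hdisj, pow_add]
    ring
  rw [Finset.sum_congr rfl hcong, ← Finset.mul_sum, sum_aux (univ \ F), mul_one]

end Stmt15Aux

theorem stmt15 {V : Type*} [Fintype V] [DecidableEq V] (G : SimpleGraph V) [DecidableRel G.Adj] (hd : 13 ≤ G.minDegree) :
    ∃ S : Finset V, IsAbDom G 1 2 S ∧ (S.card : ℝ) ≤ (Fintype.card V : ℝ) / 2 := by
  classical
  have hdeg : ∀ v : V, 13 ≤ (G.neighborFinset v).card := by
    intro v
    have h1 := G.minDegree_le_degree v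
    rw [G.card_neighborFinset_eq_degree]
    exact hd.trans h1
  have hvnot : ∀ v : V, v ∉ G.neighborFinset v := by
    intro v
    simp [SimpleGraph.mem_neighborFinset]
  -- a 13-element subset of each neighborhood
  have hT : ∀ v : V, ∃ T : Finset V, T ⊆ G.neighborFinset v ∧ T.card = 13 :=
    fun v => Finset.exists_subset_card_eq (hdeg v)
  choose T hTsub hTcard using hT
  -- a distinguished neighbor of each vertex
  have hnb : ∀ v : V, ∃ u, u ∈ G.neighborFinset v := by
    intro v
    have h13 := hdeg v
    have : 0 < (G.neighborFinset v).card := by omega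
    exact Finset.card_pos.mp this
  choose nbr hnbr using hnb
  -- bad sets and cost
  set bad1 : Finset V → Finset V :=
    fun S => S.filter (fun v => G.neighborFinset v ∩ S = ∅) with hbad1
  set bad2 : Finset V → Finset V :=
    fun S => (univ \ S).filter (fun v => (G.neighborFinset v ∩ S).card ≤ 1) with hbad2
  set cost : Finset V → ℕ := fun S => S.card + (bad1 S).card + 2 * (bad2 S).card with hcost
  -- indicator sum formula for cost
  have hcard_sum : ∀ A : Finset V, (A.card : ℝ) = ∑ v ∈ (univ : Finset V), (if v ∈ A then (1:ℝ) else 0) := by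
    intro A
    rw [Finset.sum_boole]
    congr 1
    simp [Finset.filter_mem_eq_inter]
  have cost_eq : ∀ S : Finset V, (cost S : ℝ) =
      ∑ v ∈ (univ : Finset V), ((if v ∈ S then (1:ℝ) else 0)
        + (if v ∈ bad1 S then 1 else 0) + 2 * (if v ∈ bad2 S then 1 else 0)) := by
    intro S
    rw [Finset.sum_add_distrib, Finset.sum_add_distrib, ← Finset.mul_sum,
      ← hcard_sum S, ← hcard_sum (bad1 S), ← hcard_sum (bad2 S)]
    push_cast [hcost]
    ring
  -- per-vertex expectation bound
  have perv : ∀ v : V,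
      ∑ S ∈ (univ : Finset V).powerset, wgt S * ((if v ∈ S then (1:ℝ) else 0)
        + (if v ∈ bad1 S then 1 else 0) + 2 * (if v ∈ bad2 S then 1 else 0))
      ≤ 2/5 + 27 * (3/5 : ℝ)^13 := by
    intro v
    have hptw : ∀ S : Finset V,
        wgt S * ((if v ∈ S then (1:ℝ) else 0)
          + (if v ∈ bad1 S then 1 else 0) + 2 * (if v ∈ bad2 S then 1 else 0))
        ≤ wgt S * ((1 - (if S ∩ {v} = ∅ then (1:ℝ) else 0))
          + (if S ∩ T v = ∅ then 1 else 0)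
          + 2 * ∑ t ∈ T v, (if S ∩ insert v ((T v).erase t) = ∅ then (1:ℝ) else 0)) := by
      intro S
      have hw := (wgt_pos S).le
      refine mul_le_mul_of_nonneg_left ?_ hw
      have e1 : (if v ∈ S then (1:ℝ) else 0) = 1 - (if S ∩ {v} = ∅ then (1:ℝ) else 0) := by
        by_cases hv : v ∈ S
        · have : S ∩ {v} = {v} := by
            ext x; simp only [mem_inter, mem_singleton]
            constructor
            · exact fun h => h.2
            · rintro rfl; exact ⟨hv, rfl⟩
          simp [hv, this]
        · have : S ∩ {v} = ∅ := by
            ext x; simp only [mem_inter, mem_singleton, notMem_empty, iff_false, not_and]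
            rintro hx rfl; exact hv hx
          simp [hv, this]
      have e2 : (if v ∈ bad1 S then (1:ℝ) else 0) ≤ (if S ∩ T v = ∅ then 1 else 0) := by
        by_cases hv : v ∈ bad1 S
        · have hNe : G.neighborFinset v ∩ S = ∅ := (Finset.mem_filter.mp hv).2
          have : S ∩ T v = ∅ := by
            apply Finset.eq_empty_of_forall_notMem
            intro x hx
            rw [mem_inter] at hx
            have : x ∈ G.neighborFinset v ∩ S := mem_inter.mpr ⟨hTsub v hx.2, hx.1⟩
            simp [hNe] at this
          simp [hv, this]
        · simp only [hv, if_false]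
          positivity
      have e3 : (if v ∈ bad2 S then (1:ℝ) else 0)
          ≤ ∑ t ∈ T v, (if S ∩ insert v ((T v).erase t) = ∅ then (1:ℝ) else 0) := by
        by_cases hv : v ∈ bad2 S
        · have hvS : v ∉ S := (mem_sdiff.mp (Finset.mem_filter.mp hv).1).2
          have hle1 : (G.neighborFinset v ∩ S).card ≤ 1 := (Finset.mem_filter.mp hv).2
          have hTne : (T v).Nonempty := by
            rw [← Finset.card_pos, hTcard]; omega
          have : ∃ t0 ∈ T v, S ∩ insert v ((T v).erase t0) = ∅ := by
            by_cases hst : (S ∩ T v).Nonempty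
            · obtain ⟨t0, ht0⟩ := hst
              rw [mem_inter] at ht0
              refine ⟨t0, ht0.2, ?_⟩
              apply Finset.eq_empty_of_forall_notMem
              intro x hx
              rw [mem_inter, Finset.mem_insert] at hx
              rcases hx.2 with rfl | hx2
              · exact hvS hx.1
              · rw [Finset.mem_erase] at hx2
                have hx3 : x ∈ G.neighborFinset v ∩ S := mem_inter.mpr ⟨hTsub v hx2.2, hx.1⟩
                have ht3 : t0 ∈ G.neighborFinset v ∩ S := mem_inter.mpr ⟨hTsub v ht0.2, ht0.1⟩
                exact hx2.1 (Finset.card_le_one.mp hle1 x hx3 t0 ht3)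
            · obtain ⟨t0, ht0⟩ := hTne
              refine ⟨t0, ht0, ?_⟩
              apply Finset.eq_empty_of_forall_notMem
              intro x hx
              rw [mem_inter, Finset.mem_insert] at hx
              rcases hx.2 with rfl | hx2
              · exact hvS hx.1
              · exact hst ⟨x, mem_inter.mpr ⟨hx.1, (Finset.mem_erase.mp hx2).2⟩⟩
          obtain ⟨t0, ht0T, ht0⟩ := this
          rw [if_pos hv]
          have hsum := Finset.single_le_sum
            (f := fun t => (if S ∩ insert v ((T v).erase t) = ∅ then (1:ℝ) else 0))
            (fun t _ => by positivity) ht0T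
          simpa [ht0] using hsum
        · simp only [hv, if_false]
          refine Finset.sum_nonneg (fun t _ => ?_)
          positivity
      linarith [e1, e2, e3]
    calc ∑ S ∈ (univ : Finset V).powerset, wgt S * ((if v ∈ S then (1:ℝ) else 0)
        + (if v ∈ bad1 S then 1 else 0) + 2 * (if v ∈ bad2 S then 1 else 0))
        ≤ ∑ S ∈ (univ : Finset V).powerset, wgt S * ((1 - (if S ∩ {v} = ∅ then (1:ℝ) else 0))
          + (if S ∩ T v = ∅ then 1 else 0)
          + 2 * ∑ t ∈ T v, (if S ∩ insert v ((T v).erase t) = ∅ then (1:ℝ) else 0)) :=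
          Finset.sum_le_sum (fun S _ => hptw S)
      _ = 2/5 + 27 * (3/5 : ℝ)^13 := by
          have expand : ∀ S : Finset V, wgt S * ((1 - (if S ∩ {v} = ∅ then (1:ℝ) else 0))
              + (if S ∩ T v = ∅ then 1 else 0)
              + 2 * ∑ t ∈ T v, (if S ∩ insert v ((T v).erase t) = ∅ then (1:ℝ) else 0))
            = wgt S - (if S ∩ {v} = ∅ then wgt S else 0)
              + (if S ∩ T v = ∅ then wgt S else 0)
              + 2 * ∑ t ∈ T v, (if S ∩ insert v ((T v).erase t) = ∅ then wgt S else 0) := by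
            intro S
            have h1 : wgt S * (if S ∩ {v} = ∅ then (1:ℝ) else 0)
                = (if S ∩ {v} = ∅ then wgt S else 0) := by split <;> ring
            have h2 : wgt S * (if S ∩ T v = ∅ then (1:ℝ) else 0)
                = (if S ∩ T v = ∅ then wgt S else 0) := by split <;> ring
            have h3 : wgt S * ∑ t ∈ T v, (if S ∩ insert v ((T v).erase t) = ∅ then (1:ℝ) else 0)
                = ∑ t ∈ T v, (if S ∩ insert v ((T v).erase t) = ∅ then wgt S else 0) := by
              rw [Finset.mul_sum]
              refine Finset.sum_congr rfl fun t _ => ?_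
              split <;> ring
            calc wgt S * ((1 - (if S ∩ {v} = ∅ then (1:ℝ) else 0))
                  + (if S ∩ T v = ∅ then 1 else 0)
                  + 2 * ∑ t ∈ T v, (if S ∩ insert v ((T v).erase t) = ∅ then (1:ℝ) else 0))
                = wgt S - wgt S * (if S ∩ {v} = ∅ then (1:ℝ) else 0)
                  + wgt S * (if S ∩ T v = ∅ then (1:ℝ) else 0)
                  + 2 * (wgt S * ∑ t ∈ T v, (if S ∩ insert v ((T v).erase t) = ∅ then (1:ℝ) else 0)) := by
                  ring
              _ = _ := by rw [h1, h2, h3]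
          rw [Finset.sum_congr rfl (fun S _ => expand S)]
          rw [Finset.sum_add_distrib, Finset.sum_add_distrib, Finset.sum_sub_distrib,
            sum_wgt, sum_wgt_inter_empty, sum_wgt_inter_empty, ← Finset.mul_sum,
            Finset.sum_comm]
          have hinner : ∀ t ∈ T v,
              ∑ S ∈ (univ : Finset V).powerset,
                (if S ∩ insert v ((T v).erase t) = ∅ then wgt S else 0)
              = (3/5 : ℝ)^13 := by
            intro t ht
            rw [sum_wgt_inter_empty]
            congr 1
            rw [Finset.card_insert_of_notMem, Finset.card_erase_of_mem ht, hTcard]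
            intro hmem
            exact hvnot v (hTsub v (Finset.erase_subset _ _ hmem))
          rw [Finset.sum_congr rfl hinner, Finset.sum_const, hTcard, Finset.card_singleton]

          ring
  -- total expectation bound
  have key : ∑ S ∈ (univ : Finset V).powerset, wgt S * (cost S : ℝ)
      ≤ (Fintype.card V : ℝ) / 2 := by
    have h1 : ∑ S ∈ (univ : Finset V).powerset, wgt S * (cost S : ℝ)
        = ∑ v ∈ (univ : Finset V), ∑ S ∈ (univ : Finset V).powerset,
            wgt S * ((if v ∈ S then (1:ℝ) else 0)
              + (if v ∈ bad1 S then 1 else 0) + 2 * (if v ∈ bad2 S then 1 else 0)) := by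
      rw [Finset.sum_comm]
      refine Finset.sum_congr rfl (fun S _ => ?_)
      rw [cost_eq S, Finset.mul_sum]
    rw [h1]
    calc ∑ v ∈ (univ : Finset V), ∑ S ∈ (univ : Finset V).powerset,
            wgt S * ((if v ∈ S then (1:ℝ) else 0)
              + (if v ∈ bad1 S then 1 else 0) + 2 * (if v ∈ bad2 S then 1 else 0))
        ≤ ∑ _v ∈ (univ : Finset V), (2/5 + 27 * (3/5 : ℝ)^13) :=
          Finset.sum_le_sum (fun v _ => perv v)
      _ = (Fintype.card V : ℝ) * (2/5 + 27 * (3/5)^13) := by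
          rw [Finset.sum_const, Finset.card_univ]; push_cast; ring
      _ ≤ (Fintype.card V : ℝ) / 2 := by
          have : (2/5 + 27 * (3/5 : ℝ)^13) ≤ 1/2 := by norm_num
          have hn : (0:ℝ) ≤ (Fintype.card V : ℝ) := Nat.cast_nonneg _
          nlinarith
  -- extract a good S
  obtain ⟨S, hS⟩ : ∃ S : Finset V, (cost S : ℝ) ≤ (Fintype.card V : ℝ) / 2 := by
    by_contra hc
    push_neg at hc
    have hlt : (Fintype.card V : ℝ) / 2 < ∑ S ∈ (univ : Finset V).powerset, wgt S * (cost S : ℝ) := by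
      have h0 : (Fintype.card V : ℝ) / 2
          = ∑ S ∈ (univ : Finset V).powerset, wgt S * ((Fintype.card V : ℝ) / 2) := by
        rw [← Finset.sum_mul, sum_wgt, one_mul]
      rw [h0]
      refine Finset.sum_lt_sum_of_nonempty ⟨∅, Finset.mem_powerset.mpr (Finset.empty_subset _)⟩ ?_
      intro i _
      exact mul_lt_mul_of_pos_left (hc i) (wgt_pos i)
    linarith
  -- repair
  refine ⟨S ∪ bad2 S ∪ (bad1 S ∪ bad2 S).image nbr, ⟨?_, ?_⟩, ?_⟩
  · -- every vertex of S' has a neighbor in S'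
    intro v hv
    rw [Finset.one_le_card]
    rw [Finset.mem_union] at hv
    rcases hv with hv | hv
    · rw [Finset.mem_union] at hv
      rcases hv with hv | hv
      · by_cases hb : G.neighborFinset v ∩ S = ∅
        · have hv1 : v ∈ bad1 S := Finset.mem_filter.mpr ⟨hv, hb⟩
          refine ⟨nbr v, mem_inter.mpr ⟨hnbr v, ?_⟩⟩
          exact Finset.mem_union_right _ (Finset.mem_image_of_mem nbr
            (Finset.mem_union_left _ hv1))
        · obtain ⟨u, hu⟩ := Finset.nonempty_iff_ne_empty.mpr hb
          rw [mem_inter] at hu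
          exact ⟨u, mem_inter.mpr ⟨hu.1, Finset.mem_union_left _ (Finset.mem_union_left _ hu.2)⟩⟩
      · refine ⟨nbr v, mem_inter.mpr ⟨hnbr v, ?_⟩⟩
        exact Finset.mem_union_right _ (Finset.mem_image_of_mem nbr
          (Finset.mem_union_right _ hv))
    · obtain ⟨w, hw, hwv⟩ := Finset.mem_image.mp hv
      refine ⟨w, mem_inter.mpr ⟨?_, ?_⟩⟩
      · rw [SimpleGraph.mem_neighborFinset]
        have : G.Adj w v := by rw [← hwv]; exact (SimpleGraph.mem_neighborFinset _ _ _).mp (hnbr w)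
        exact this.symm
      · rw [Finset.mem_union] at hw
        rcases hw with hw | hw
        · exact Finset.mem_union_left _ (Finset.mem_union_left _ (Finset.mem_filter.mp hw).1)
        · exact Finset.mem_union_left _ (Finset.mem_union_right _ hw)
  · -- every vertex outside S' has ≥ 2 neighbors in S'
    intro v hv
    have hvS : v ∉ S := fun h => hv (Finset.mem_union_left _ (Finset.mem_union_left _ h))
    have hvb2 : v ∉ bad2 S := fun h => hv (Finset.mem_union_left _ (Finset.mem_union_right _ h))
    have h2 : 2 ≤ (G.neighborFinset v ∩ S).card := by
      by_contra hcon
      push_neg at hcon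
      exact hvb2 (Finset.mem_filter.mpr ⟨mem_sdiff.mpr ⟨mem_univ v, hvS⟩, by omega⟩)
    refine le_trans h2 (Finset.card_le_card (Finset.inter_subset_inter (Finset.Subset.refl _) ?_))
    exact fun x hx => Finset.mem_union_left _ (Finset.mem_union_left _ hx)
  · -- cardinality bound
    have hc1 : (S ∪ bad2 S ∪ (bad1 S ∪ bad2 S).image nbr).card ≤ cost S := by
      have s1 : (S ∪ bad2 S ∪ (bad1 S ∪ bad2 S).image nbr).card
          ≤ (S ∪ bad2 S).card + ((bad1 S ∪ bad2 S).image nbr).card := Finset.card_union_le _ _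
      have s2 : (S ∪ bad2 S).card ≤ S.card + (bad2 S).card := Finset.card_union_le _ _
      have s3 : ((bad1 S ∪ bad2 S).image nbr).card ≤ (bad1 S ∪ bad2 S).card :=
        Finset.card_image_le
      have s4 : (bad1 S ∪ bad2 S).card ≤ (bad1 S).card + (bad2 S).card := Finset.card_union_le _ _
      have : cost S = S.card + (bad1 S).card + 2 * (bad2 S).card := by rw [hcost]
      omega
    calc ((S ∪ bad2 S ∪ (bad1 S ∪ bad2 S).image nbr).card : ℝ)
        ≤ (cost S : ℝ) := by exact_mod_cast hc1
      _ ≤ (Fintype.card V : ℝ) / 2 := hS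
end
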